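/- The projective conic defined by the homogenization of g_{21}(x,y) = 21(11x^2 - 182x - 229) + y^2, i.e. 21(11X^2 - 182XZ - 229Z^2) + Y^2 = 0, has no rational points. -/
import Mathlib

/-- Mod 7, the conic equation forces `Y ≡ 0`. -/
lemma w21_mod7_Y : ∀ a b c : ZMod 7,
    21 * (11 * a ^ 2 - 182 * a * b - 229 * b ^ 2) + c ^ 2 = 0 → c = 0 := by decide

/-- Mod 7, if `3*(11a² − 182ab − 229b²) + 7c² = 0` then `a = b = 0`. -/
lemma w21_mod7_step : ∀ a b c : ZMod 7,
    3 * (11 * a ^ 2 - 182 * a * b - 229 * b ^ 2) + 7 * c ^ 2 = 0 → a = 0 ∧ b = 0 := by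
  decide

/-- Infinite descent: the only integer solution is the trivial one. -/
lemma w21_int_descent : ∀ n : ℕ, ∀ X Y Z : ℤ,
    X.natAbs + Y.natAbs + Z.natAbs = n →
    21 * (11 * X ^ 2 - 182 * X * Z - 229 * Z ^ 2) + Y ^ 2 = 0 →
    X = 0 ∧ Y = 0 ∧ Z = 0 := by
  intro n
  induction n using Nat.strong_induction_on with
  | _ n ih =>
    intro X Y Z hn h
    rcases Nat.eq_zero_or_pos n with h0 | hpos
    · subst h0
      simp only [Nat.add_eq_zero] at hn
      exact ⟨Int.natAbs_eq_zero.mp hn.1.1, Int.natAbs_eq_zero.mp hn.1.2,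
        Int.natAbs_eq_zero.mp hn.2⟩
    have h7Y : (7 : ℤ) ∣ Y := by
      have := congrArg (Int.cast : ℤ → ZMod 7) h
      push_cast at this
      exact (ZMod.intCast_zmod_eq_zero_iff_dvd Y 7).mp (w21_mod7_Y _ _ _ this)
    obtain ⟨y, rfl⟩ := h7Y
    have h2 : 3 * (11 * X ^ 2 - 182 * X * Z - 229 * Z ^ 2) + 7 * y ^ 2 = 0 := by
      nlinarith [h]
    have hXZ : (X : ZMod 7) = 0 ∧ (Z : ZMod 7) = 0 := by
      have := congrArg (Int.cast : ℤ → ZMod 7) h2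
      push_cast at this
      exact w21_mod7_step _ _ _ this
    obtain ⟨x, rfl⟩ := (ZMod.intCast_zmod_eq_zero_iff_dvd X 7).mp hXZ.1
    obtain ⟨z, rfl⟩ := (ZMod.intCast_zmod_eq_zero_iff_dvd Z 7).mp hXZ.2
    have h3 : 21 * (11 * x ^ 2 - 182 * x * z - 229 * z ^ 2) + y ^ 2 = 0 := by
      have h7 : (7 : ℤ) * (21 * (11 * x ^ 2 - 182 * x * z - 229 * z ^ 2) + y ^ 2) = 7 * 0 := by
        linear_combination h2
      exact mul_left_cancel₀ (by norm_num) h7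
    · have hlt : x.natAbs + y.natAbs + z.natAbs < n := by
        have hx : (7 * x).natAbs = 7 * x.natAbs := by simp [Int.natAbs_mul]
        have hy : (7 * y).natAbs = 7 * y.natAbs := by simp [Int.natAbs_mul]
        have hz : (7 * z).natAbs = 7 * z.natAbs := by simp [Int.natAbs_mul]
        omega
      obtain ⟨hx0, hy0, hz0⟩ := ih _ hlt x y z rfl h3
      subst hx0; subst hy0; subst hz0
      exact ⟨by ring, by ring, by ring⟩

lemma rat_num_eq_mul_den (q : ℚ) : (q.num : ℚ) = q * q.den := by
  have hd : (q.den : ℚ) ≠ 0 := by exact_mod_cast q.den_nz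
  have h := Rat.num_div_den q
  rw [div_eq_iff hd] at h
  exact h

/-- The projective conic `231X² − 3822XZ − 4809Z² + Y² = 0` (the homogenization of
`g₂₁(x,y) = 21(11x² − 182x − 229) + y²`) has no rational points. -/
theorem w21_conic_no_rational_points :
    ¬ ∃ X Y Z : ℚ, (X ≠ 0 ∨ Y ≠ 0 ∨ Z ≠ 0) ∧
      21 * (11 * X ^ 2 - 182 * X * Z - 229 * Z ^ 2) + Y ^ 2 = 0 := by
  rintro ⟨X, Y, Z, hne, h⟩
  set a : ℤ := X.num * Y.den * Z.den with ha
  set b : ℤ := (X.den : ℤ) * Y.num * Z.den with hb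
  set c : ℤ := (X.den : ℤ) * Y.den * Z.num with hc
  have hXd : (X.den : ℚ) ≠ 0 := by exact_mod_cast X.den_nz
  have hYd : (Y.den : ℚ) ≠ 0 := by exact_mod_cast Y.den_nz
  have hZd : (Z.den : ℚ) ≠ 0 := by exact_mod_cast Z.den_nz
  have haq : (a : ℚ) = X * (X.den * Y.den * Z.den) := by
    push_cast [ha]; rw [rat_num_eq_mul_den X]; ring
  have hbq : (b : ℚ) = Y * (X.den * Y.den * Z.den) := by
    push_cast [hb]; rw [rat_num_eq_mul_den Y]; ring
  have hcq : (c : ℚ) = Z * (X.den * Y.den * Z.den) := by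
    push_cast [hc]; rw [rat_num_eq_mul_den Z]; ring
  have hint : 21 * (11 * a ^ 2 - 182 * a * c - 229 * c ^ 2) + b ^ 2 = 0 := by
    have : (21 * (11 * (a:ℚ) ^ 2 - 182 * a * c - 229 * c ^ 2) + b ^ 2 : ℚ) = 0 := by
      rw [haq, hbq, hcq]
      linear_combination ((X.den : ℚ) * Y.den * Z.den) ^ 2 * h
    exact_mod_cast this
  obtain ⟨ha0, hb0, hc0⟩ := w21_int_descent _ a b c rfl hint
  have hX0 : X = 0 := by
    have h' := haq; rw [ha0] at h'
    have := mul_ne_zero (mul_ne_zero hXd hYd) hZd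
    simpa [this] using h'.symm
  have hY0 : Y = 0 := by
    have h' := hbq; rw [hb0] at h'
    have := mul_ne_zero (mul_ne_zero hXd hYd) hZd
    simpa [this] using h'.symm
  have hZ0 : Z = 0 := by
    have h' := hcq; rw [hc0] at h'
    have := mul_ne_zero (mul_ne_zero hXd hYd) hZd
    simpa [this] using h'.symm
  rcases hne with h | h | h <;> [exact h hX0; exact h hY0; exact h hZ0]
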